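/- arXiv:2105.06357 — 7 statements merged into one kernel-verified Lean document; each statement's English description precedes it below -/
import Mathlib

section
/- For any arrangement of pairwise non-overlapping unit disks in the plane, a single unit disk can non-trivially intersect (overlap with positive area) at most 5 of them. -/
/-!
The centres of the disks meeting the unit disk around `c` lie at distance `< 2` from `c`, and any
two of them are at distance `≥ 2`. In a triangle whose side opposite a vertex is longer than both
adjacent sides, the angle at that vertex exceeds `π / 3` (law of cosines), so seen from `c` any two
centres are more than `π / 3` apart in direction. Six such directions do not fit around a circle.
-/

open Real Set

theorem Real.mem_Ioo_of_cos_lt_half {x : ℝ} (h0 : 0 ≤ x) (h2π : x ≤ 2 * π)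
    (h : cos x < 1 / 2) : x ∈ Ioo (π / 3) (5 * π / 3) := by
  have hπ := pi_pos
  constructor
  · by_contra! hx
    have := cos_le_cos_of_nonneg_of_le_pi h0 (by linarith) hx
    rw [cos_pi_div_three] at this
    linarith
  · by_contra! hx
    have : cos (π / 3) ≤ cos (2 * π - x) :=
      cos_le_cos_of_nonneg_of_le_pi (by linarith) (by linarith) (by linarith)
    rw [cos_pi_div_three, cos_two_pi_sub] at this
    linarith

theorem Real.encard_le_five_of_pairwise_cos_sub_lt_half {A : Set ℝ} (hA : A ⊆ Ioc (-π) π)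
    (h : A.Pairwise fun x y => cos (x - y) < 1 / 2) : A.encard ≤ 5 := by
  by_contra! h5
  obtain ⟨t, htA, ht⟩ := exists_subset_encard_eq (Order.add_one_le_of_lt h5)
  have htfin : t.Finite := finite_of_encard_eq_coe ht
  have hcard : htfin.toFinset.card = 6 := by
    rw [htfin.encard_eq_coe_toFinset_card] at ht
    exact_mod_cast ht
  set g := htfin.toFinset.orderEmbOfFin hcard
  have hgA (k : Fin 6) : g k ∈ A :=
    htA (htfin.mem_toFinset.mp (htfin.toFinset.orderEmbOfFin_mem hcard k))
  have gap {k l : Fin 6} (hkl : k < l) : g l - g k ∈ Ioo (π / 3) (5 * π / 3) := by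
    have hlt : g k < g l := g.strictMono hkl
    obtain ⟨⟨hk₁, hk₂⟩, ⟨hl₁, hl₂⟩⟩ := And.intro (hA (hgA k)) (hA (hgA l))
    exact mem_Ioo_of_cos_lt_half (by linarith) (by linarith) (h (hgA l) (hgA k) hlt.ne')
  linarith [(gap (show (0 : Fin 6) < 1 by decide)).1, (gap (show (1 : Fin 6) < 2 by decide)).1,
    (gap (show (2 : Fin 6) < 3 by decide)).1, (gap (show (3 : Fin 6) < 4 by decide)).1,
    (gap (show (4 : Fin 6) < 5 by decide)).1, (gap (show (0 : Fin 6) < 5 by decide)).2]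

theorem Complex.cos_arg_sub_lt_half {z w : ℂ} (hz : ‖z‖ < ‖z - w‖) (hw : ‖w‖ < ‖z - w‖) :
    Real.cos (arg z - arg w) < 1 / 2 := by
  have hinner : ‖z‖ * ‖w‖ * Real.cos (arg z - arg w) = z.re * w.re + z.im * w.im := by
    rw [Real.cos_sub, ← norm_mul_cos_arg z, ← norm_mul_cos_arg w, ← norm_mul_sin_arg z,
      ← norm_mul_sin_arg w]
    ring
  have hsq : ‖z - w‖ ^ 2 = ‖z‖ ^ 2 + ‖w‖ ^ 2 - 2 * (z.re * w.re + z.im * w.im) := by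
    simp only [Complex.sq_norm, normSq_apply, sub_re, sub_im]
    ring
  have hz0 : 0 < ‖z‖ := norm_pos_iff.mpr fun h => by simp [h] at hw
  have hw0 : 0 < ‖w‖ := norm_pos_iff.mpr fun h => by simp [h] at hz
  by_contra! hcos
  have : ‖z - w‖ ^ 2 ≤ ‖z‖ ^ 2 + ‖w‖ ^ 2 - ‖z‖ * ‖w‖ := by
    nlinarith [mul_pos hz0 hw0]
  rcases le_total ‖z‖ ‖w‖ with h | h <;> nlinarith

theorem Complex.encard_le_five_of_pairwise_norm_lt_norm_sub {s : Set ℂ}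
    (h : s.Pairwise fun z w => ‖z‖ < ‖z - w‖) : s.encard ≤ 5 := by
  have hcos : s.Pairwise fun z w => Real.cos (arg z - arg w) < 1 / 2 := fun z hz w hw hzw =>
    cos_arg_sub_lt_half (h hz hw hzw) (by simpa [norm_sub_rev] using h hw hz hzw.symm)
  have hinj : s.InjOn arg := fun z hz w hw hzw => by
    by_contra hne
    have : Real.cos (arg z - arg w) < 1 / 2 := hcos hz hw hne
    rw [hzw, sub_self, Real.cos_zero] at this
    norm_num at this
  rw [← hinj.encard_image]
  refine encard_le_five_of_pairwise_cos_sub_lt_half ?_ (hinj.pairwise_image.mpr hcos)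
  rintro _ ⟨z, -, rfl⟩
  exact ⟨neg_pi_lt_arg z, arg_le_pi z⟩

/-- For any family of pairwise non-overlapping unit disks in the plane
(closed disks of radius 1 whose interiors, i.e. the open unit balls, are pairwise
disjoint), a single unit disk can non-trivially intersect (overlap with positive area,
equivalently have intersecting interiors with) at most 5 of them. -/
theorem unit_disk_overlaps_at_most_five {ι : Type*}
    (p : ι → EuclideanSpace ℝ (Fin 2))
    (hdisj : Pairwise fun i j => Disjoint (Metric.ball (p i) 1) (Metric.ball (p j) 1))
    (c : EuclideanSpace ℝ (Fin 2)) :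
    {i | (Metric.ball c 1 ∩ Metric.ball (p i) 1).Nonempty}.Finite ∧
    {i | (Metric.ball c 1 ∩ Metric.ball (p i) 1).Nonempty}.ncard ≤ 5 := by
  set S := {i | (Metric.ball c 1 ∩ Metric.ball (p i) 1).Nonempty}
  let F : EuclideanSpace ℝ (Fin 2) ≃ₗᵢ[ℝ] ℂ := Complex.orthonormalBasisOneI.repr.symm
  let f (i : ι) : ℂ := F (p i - c)
  have hnear {i : ι} (hi : i ∈ S) : ‖f i‖ < 2 := by
    rw [F.norm_map, ← dist_eq_norm, dist_comm]
    linarith [Metric.dist_lt_add_of_nonempty_ball_inter_ball hi]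
  have hfar {i j : ι} (hij : i ≠ j) : 2 ≤ ‖f i - f j‖ := by
    rw [← map_sub, sub_sub_sub_cancel_right, F.norm_map, ← dist_eq_norm]
    linarith [(disjoint_ball_ball_iff one_pos one_pos).mp (hdisj hij)]
  have hpair : S.Pairwise fun i j => ‖f i‖ < ‖f i - f j‖ := fun i hi j _ hij =>
    (hnear hi).trans_le (hfar hij)
  have hinj : S.InjOn f := fun i _ j _ hfij =>
    by_contra fun hij => (hfar hij).not_gt (by simp [hfij])
  rw [← encard_le_coe_iff_finite_ncard_le, ← hinj.encard_image]
  exact Complex.encard_le_five_of_pairwise_norm_lt_norm_sub (hinj.pairwise_image.mpr hpair)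
end

section
/- The unlabeled dependency graph of a tabletop rearrangement instance with identical cylinders is a planar bipartite graph with maximum degree at most 5. -/
/-- A graph is planar if it has a plane embedding: vertices map injectively to points of
the plane and each edge is realized by a simple continuous curve between the endpoints,
such that distinct edges meet only at shared endpoints and no curve passes through
another vertex. -/
def HasPlanarEmbedding {V : Type*} (G : SimpleGraph V) : Prop :=
  ∃ (f : V → ℝ × ℝ) (γ : V → V → ℝ → ℝ × ℝ),
    Function.Injective f ∧
    (∀ u v, G.Adj u v →
      ContinuousOn (γ u v) (Set.Icc 0 1) ∧ Set.InjOn (γ u v) (Set.Icc 0 1) ∧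
      γ u v 0 = f u ∧ γ u v 1 = f v) ∧
    (∀ u v u' v', G.Adj u v → G.Adj u' v' → s(u, v) ≠ s(u', v') →
      ∀ x ∈ γ u v '' Set.Icc 0 1 ∩ γ u' v' '' Set.Icc 0 1,
        (x = f u ∨ x = f v) ∧ (x = f u' ∨ x = f v')) ∧
    (∀ u v w, G.Adj u v → w ≠ u → w ≠ v → f w ∉ γ u v '' Set.Icc 0 1)

/-- The unlabeled dependency graph of an unlabeled tabletop rearrangement instance with
identical unit cylinders: a bipartite graph on the start poses (`Sum.inl`) and the goal
poses (`Sum.inr`), with an edge between a start pose and a goal pose iff the interiors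
of the corresponding unit disks intersect. -/
def unlabeledDepGraph (n : ℕ) (s g : Fin n → EuclideanSpace ℝ (Fin 2)) :
    SimpleGraph (Fin n ⊕ Fin n) where
  Adj u v := ∃ i j, ((u = Sum.inl i ∧ v = Sum.inr j) ∨ (u = Sum.inr j ∧ v = Sum.inl i)) ∧
      (Metric.ball (s i) 1 ∩ Metric.ball (g j) 1).Nonempty
  symm := by
    constructor
    rintro u v ⟨i, j, h1, h2⟩
    exact ⟨i, j, by tauto, h2⟩
  loopless := by
    constructor
    rintro u ⟨i, j, (⟨h1, h2⟩ | ⟨h1, h2⟩), -⟩ <;> rw [h1] at h2 <;> simp at h2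

/-!
Overlapping unit disks are exactly those whose centres are less than `2` apart, while the
centres within one arrangement are at least `2` apart.

Degree: the neighbours of a disk are centres in the open `2`-ball around its centre that are
pairwise at least `2` apart, so by the law of cosines any two of them are seen from the centre
under an angle greater than `π / 3`; six such directions do not fit around a circle.

Planarity: draw each edge as the segment between the two centres, after translating the goal
arrangement slightly so that no start centre coincides with a goal centre while every edge stays
shorter than `2`. Two edges without a common endpoint cannot meet, since a common point would make
the two "diagonals" sum to less than `4` although each is at least `2`. Two edges with a common
endpoint that meet elsewhere point in the same direction from it, which puts their other
endpoints less than `2` apart. A segment shorter than `2` contains no third centre.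
-/

open Real Metric Function Filter Topology

theorem pi_div_three_lt_of_cos_lt_half {x : ℝ} (h0 : 0 ≤ x) (h2π : x < 2 * π)
    (h : cos x < 1 / 2) : π / 3 < x ∧ x < 5 * π / 3 := by
  have hπ := pi_pos
  constructor <;> by_contra! hx
  · have := cos_le_cos_of_nonneg_of_le_pi h0 (by linarith) hx
    rw [cos_pi_div_three] at this; linarith
  · have := cos_le_cos_of_nonneg_of_le_pi (by linarith) (by linarith)
      (by linarith : 2 * π - x ≤ π / 3)
    rw [cos_pi_div_three, cos_two_pi_sub] at this; linarith

theorem not_six_angles_cos_lt_half (θ : Fin 6 → ℝ) (hθ : ∀ k, θ k ∈ Set.Ioc (-π) π)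
    (h : Pairwise fun k l => cos (θ k - θ l) < 1 / 2) : False := by
  set σ := Tuple.sort θ
  have gap : ∀ k l : Fin 6, k < l →
      π / 3 < θ (σ l) - θ (σ k) ∧ θ (σ l) - θ (σ k) < 5 * π / 3 := by
    intro k l hkl
    obtain ⟨hk, -⟩ := hθ (σ k)
    obtain ⟨-, hl⟩ := hθ (σ l)
    exact pi_div_three_lt_of_cos_lt_half (sub_nonneg.2 (Tuple.monotone_sort θ hkl.le))
      (by linarith) (h (σ.injective.ne hkl.ne'))
  linarith [(gap 0 1 (by decide)).1, (gap 1 2 (by decide)).1, (gap 2 3 (by decide)).1,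
    (gap 3 4 (by decide)).1, (gap 4 5 (by decide)).1, (gap 0 5 (by decide)).2]

theorem Complex.norm_sub_sq_eq_cos_arg_sub (z w : ℂ) :
    ‖z - w‖ ^ 2 = ‖z‖ ^ 2 + ‖w‖ ^ 2 - 2 * ‖z‖ * ‖w‖ * Real.cos (z.arg - w.arg) := by
  rw [Real.cos_sub, ← normSq_eq_norm_sq, ← normSq_eq_norm_sq, ← normSq_eq_norm_sq]
  simp only [normSq_apply, sub_re, sub_im]
  rw [← norm_mul_cos_arg z, ← norm_mul_sin_arg z, ← norm_mul_cos_arg w, ← norm_mul_sin_arg w]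
  ring

theorem Complex.norm_sub_lt_of_half_le_cos_arg_sub {z w : ℂ} {r : ℝ} (hz : ‖z‖ < r) (hw : ‖w‖ < r)
    (h : 1 / 2 ≤ Real.cos (z.arg - w.arg)) : ‖z - w‖ < r := by
  have hzw := norm_sub_sq_eq_cos_arg_sub z w
  have : ‖z - w‖ ^ 2 < r ^ 2 := by
    nlinarith [norm_nonneg z, norm_nonneg w, mul_nonneg (norm_nonneg z) (norm_nonneg w),
      mul_pos (sub_pos.2 hz) (sub_pos.2 hw)]
  exact lt_of_pow_lt_pow_left₀ 2 ((norm_nonneg z).trans hz.le) this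

theorem Complex.not_six_separated_in_ball {r : ℝ} (q : Fin 6 → ℂ) (hq : ∀ k, ‖q k‖ < r)
    (hsep : Pairwise fun k l => r ≤ ‖q k - q l‖) : False :=
  not_six_angles_cos_lt_half (fun k => (q k).arg)
    (fun k => ⟨(q k).neg_pi_lt_arg, (q k).arg_le_pi⟩)
    fun _ _ hkl => lt_of_not_ge fun hcos =>
      (hsep hkl).not_gt (norm_sub_lt_of_half_le_cos_arg_sub (hq _) (hq _) hcos)

theorem ncard_setOf_dist_lt_le_five {ι : Type*} {r : ℝ} (c : EuclideanSpace ℝ (Fin 2))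
    (p : ι → EuclideanSpace ℝ (Fin 2)) (hp : Pairwise fun i j => r ≤ dist (p i) (p j)) :
    {i | dist (p i) c < r}.ncard ≤ 5 := by
  by_contra! h
  obtain ⟨t, hts, ht⟩ := Set.exists_subset_card_eq (Nat.succ_le_of_lt h)
  have : Finite t := Set.finite_of_ncard_ne_zero (by omega)
  let k : Fin 6 ≃ t := (Finite.equivFinOfCardEq ht).symm
  let e := Complex.orthonormalBasisOneI.repr.symm
  refine Complex.not_six_separated_in_ball (r := r) (fun l => e (p (k l)) - e c) (fun l => ?_) ?_
  · rw [← map_sub, e.norm_map, ← dist_eq_norm]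
    exact hts (k l).2
  · intro l m hlm
    rw [sub_sub_sub_cancel_right, ← map_sub, e.norm_map, ← dist_eq_norm]
    exact hp fun h => hlm (k.injective (Subtype.ext h))

section Segments
variable {E : Type*} [NormedAddCommGroup E] [NormedSpace ℝ E] {r : ℝ} {a b c d x : E}

theorem disjoint_segment_of_dist_lt (hac : r ≤ dist a c) (hbd : r ≤ dist b d)
    (hab : dist a b < r) (hcd : dist c d < r) : Disjoint (segment ℝ a b) (segment ℝ c d) :=
  Set.disjoint_left.2 fun x hab' hcd' => by
    linarith [dist_add_dist_of_mem_segment hab', dist_add_dist_of_mem_segment hcd',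
      dist_triangle a x c, dist_triangle b x d, dist_comm x c, dist_comm b x]

theorem eq_left_of_mem_segment_of_mem_segment (hbc : r ≤ dist b c) (hab : dist a b < r)
    (hac : dist a c < r) (hxb : x ∈ segment ℝ a b) (hxc : x ∈ segment ℝ a c) : x = a := by
  by_contra hxa
  have hray : SameRay ℝ (b - a) (c - a) :=
    ((mem_segment_iff_wbtw.1 hxb).sameRay_vsub_left.symm.trans
      (mem_segment_iff_wbtw.1 hxc).sameRay_vsub_left fun h => (hxa (vsub_eq_zero_iff_eq.1 h)).elim)
  have hbc' := hray.norm_sub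
  rw [sub_sub_sub_cancel_right, ← dist_eq_norm, ← dist_eq_norm', ← dist_eq_norm'] at hbc'
  refine hbc.not_gt (hbc' ▸ abs_sub_lt_iff.2 ⟨?_, ?_⟩) <;>
    linarith [dist_nonneg (x := a) (y := b), dist_nonneg (x := a) (y := c)]

end Segments

theorem Bool.eq_or_eq_of_ne {a b : Bool} (hab : a ≠ b) (c : Bool) : c = a ∨ c = b :=
  Bool.eq_not_of_ne hab.symm ▸ Bool.eq_or_eq_not c a

section BicoloredDrawing

variable {V E : Type*} [NormedAddCommGroup E] [NormedSpace ℝ E] {c : V → E} {col : V → Bool}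
  {r : ℝ} {u v u' v' w : V} {x : E}

theorem notMem_segment_of_bicolored (hsame : ∀ u w, u ≠ w → col u = col w → r ≤ dist (c u) (c w))
    (hcol : col u ≠ col v) (huv : dist (c u) (c v) < r) (hwu : w ≠ u) (hwv : w ≠ v) :
    c w ∉ segment ℝ (c u) (c v) := by
  intro hw
  rcases Bool.eq_or_eq_of_ne hcol (col w) with h | h
  · exact (hsame w u hwu h).not_gt
      ((mem_closedBall.1 (segment_subset_closedBall_left _ _ hw)).trans_lt huv)
  · exact (hsame w v hwv h).not_gt
      ((mem_closedBall.1 (segment_subset_closedBall_right _ _ hw)).trans_lt huv)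

theorem eq_endpoints_of_mem_segment_of_mem_segment_of_col_eq
    (hsame : ∀ u w, u ≠ w → col u = col w → r ≤ dist (c u) (c w))
    (hcol : col u ≠ col v) (hcol' : col u' ≠ col v') (hu : col u = col u')
    (huv : dist (c u) (c v) < r) (hu'v' : dist (c u') (c v') < r) (hne : s(u, v) ≠ s(u', v'))
    (hx : x ∈ segment ℝ (c u) (c v)) (hx' : x ∈ segment ℝ (c u') (c v')) :
    x = c u ∧ x = c u' ∨ x = c v ∧ x = c v' := by
  have hv : col v = col v' := by
    rw [Bool.eq_not_of_ne hcol.symm, Bool.eq_not_of_ne hcol'.symm, hu]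
  by_cases huu : u = u'
  · subst huu
    have hvv : v ≠ v' := fun h => hne (h ▸ rfl)
    have := eq_left_of_mem_segment_of_mem_segment (hsame v v' hvv hv) huv hu'v' hx hx'
    exact Or.inl ⟨this, this⟩
  by_cases hvv : v = v'
  · subst hvv
    rw [segment_symm] at hx hx'
    rw [dist_comm] at huv hu'v'
    have := eq_left_of_mem_segment_of_mem_segment (hsame u u' huu hu) huv hu'v' hx hx'
    exact Or.inr ⟨this, this⟩
  exact ((disjoint_segment_of_dist_lt (hsame u u' huu hu) (hsame v v' hvv hv) huv hu'v').ne_of_mem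
    hx hx' rfl).elim

theorem eq_endpoint_of_mem_segment_of_mem_segment_of_bicolored
    (hsame : ∀ u w, u ≠ w → col u = col w → r ≤ dist (c u) (c w))
    (hcol : col u ≠ col v) (hcol' : col u' ≠ col v')
    (huv : dist (c u) (c v) < r) (hu'v' : dist (c u') (c v') < r) (hne : s(u, v) ≠ s(u', v'))
    (hx : x ∈ segment ℝ (c u) (c v)) (hx' : x ∈ segment ℝ (c u') (c v')) :
    (x = c u ∨ x = c v) ∧ (x = c u' ∨ x = c v') := by
  rcases Bool.eq_or_eq_of_ne hcol (col u') with h | h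
  · rcases eq_endpoints_of_mem_segment_of_mem_segment_of_col_eq hsame hcol hcol' h.symm huv hu'v'
      hne hx hx' with ⟨h₁, h₂⟩ | ⟨h₁, h₂⟩
    · exact ⟨.inl h₁, .inl h₂⟩
    · exact ⟨.inr h₁, .inr h₂⟩
  · have hu : col u = col v' := by
      rw [Bool.eq_not_of_ne hcol'.symm, h, Bool.eq_not_of_ne hcol.symm, Bool.not_not]
    rw [segment_symm] at hx'
    rw [dist_comm] at hu'v'
    rw [Sym2.eq_swap (a := u')] at hne
    rcases eq_endpoints_of_mem_segment_of_mem_segment_of_col_eq hsame hcol hcol'.symm hu huv hu'v'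
      hne hx hx' with ⟨h₁, h₂⟩ | ⟨h₁, h₂⟩
    · exact ⟨.inl h₁, .inr h₂⟩
    · exact ⟨.inr h₁, .inl h₂⟩

end BicoloredDrawing

theorem hasPlanarEmbedding_of_segments {V E : Type*} [AddCommGroup E] [Module ℝ E]
    [TopologicalSpace E] [IsTopologicalAddGroup E] [ContinuousSMul ℝ E]
    {G : SimpleGraph V} (e : E →L[ℝ] ℝ × ℝ) (he : Injective e) (c : V → E) (hc : Injective c)
    (hcross : ∀ u v u' v', G.Adj u v → G.Adj u' v' → s(u, v) ≠ s(u', v') →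
      ∀ x ∈ segment ℝ (c u) (c v) ∩ segment ℝ (c u') (c v'),
        (x = c u ∨ x = c v) ∧ (x = c u' ∨ x = c v'))
    (hvert : ∀ u v w, G.Adj u v → w ≠ u → w ≠ v → c w ∉ segment ℝ (c u) (c v)) :
    HasPlanarEmbedding G := by
  set γ : V → V → ℝ → ℝ × ℝ := fun u v => e ∘ AffineMap.lineMap (c u) (c v)
  have himage : ∀ u v, γ u v '' Set.Icc 0 1 = e '' segment ℝ (c u) (c v) := fun u v => by
    rw [Set.image_comp, segment_eq_image_lineMap]
  refine ⟨e ∘ c, γ, he.comp hc,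
    fun u v huv => ⟨?_, ?_, by simp [γ], by simp [γ]⟩, ?_, ?_⟩
  · exact (e.continuous.comp AffineMap.lineMap_continuous).continuousOn
  · exact (he.comp (AffineMap.lineMap_injective ℝ (hc.ne (G.ne_of_adj huv)))).injOn
  · rintro u v u' v' huv hu'v' hne _ ⟨hx, hx'⟩
    rw [himage] at hx hx'
    obtain ⟨y, hy, rfl⟩ := hx
    obtain ⟨y', hy', hyy'⟩ := hx'
    cases he hyy'
    simpa only [comp_apply, he.eq_iff] using hcross u v u' v' huv hu'v' hne y ⟨hy, hy'⟩
  · intro u v w huv hwu hwv hw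
    rw [himage, comp_apply, he.mem_set_image] at hw
    exact hvert u v w huv hwu hwv hw

theorem hasPlanarEmbedding_of_bicolored {V E : Type*} [NormedAddCommGroup E] [NormedSpace ℝ E]
    {G : SimpleGraph V} (e : E →L[ℝ] ℝ × ℝ) (he : Injective e) {c : V → E} (hc : Injective c)
    {col : V → Bool} {r : ℝ} (hsame : ∀ u w, u ≠ w → col u = col w → r ≤ dist (c u) (c w))
    (hadj : ∀ u v, G.Adj u v → col u ≠ col v ∧ dist (c u) (c v) < r) :
    HasPlanarEmbedding G :=
  hasPlanarEmbedding_of_segments e he c hc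
    (fun u v u' v' huv hu'v' hne _ hx =>
      eq_endpoint_of_mem_segment_of_mem_segment_of_bicolored hsame (hadj u v huv).1
        (hadj u' v' hu'v').1 (hadj u v huv).2 (hadj u' v' hu'v').2 hne hx.1 hx.2)
    (fun u v _ huv hwu hwv =>
      notMem_segment_of_bicolored hsame (hadj u v huv).1 (hadj u v huv).2 hwu hwv)

theorem exists_translate_ne_preserving_dist_lt {ι κ E : Type*} [Finite ι] [Finite κ]
    [NormedAddCommGroup E] [NormedSpace ℝ E] [Nontrivial E] (s : ι → E) (g : κ → E) (r : ℝ) :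
    ∃ t : E, (∀ i j, s i ≠ g j + t) ∧ ∀ i j, dist (s i) (g j) < r → dist (s i) (g j + t) < r := by
  have hne : ∀ i j, ∀ᶠ t in 𝓝[≠] (0 : E), s i ≠ g j + t := by
    intro i j
    by_cases h : s i = g j
    · filter_upwards [self_mem_nhdsWithin] with t ht
      simpa [h] using ht
    · filter_upwards [eventually_ne_nhdsWithin (sub_ne_zero.2 h).symm] with t ht
      exact fun h' => ht (by rw [h', add_sub_cancel_left])
  have hlt : ∀ i j, ∀ᶠ t in 𝓝[≠] (0 : E), dist (s i) (g j) < r → dist (s i) (g j + t) < r := by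
    intro i j
    by_cases h : dist (s i) (g j) < r
    · have hcont : Continuous fun t => dist (s i) (g j + t) := by fun_prop
      have : Tendsto (fun t => dist (s i) (g j + t)) (𝓝[≠] 0) (𝓝 (dist (s i) (g j))) := by
        simpa using (hcont.tendsto 0).mono_left nhdsWithin_le_nhds
      exact (this.eventually_lt_const h).mono fun _ ht _ => ht
    · exact Eventually.of_forall fun _ h' => absurd h' h
  exact ((eventually_all.2 fun i => eventually_all.2 (hne i)).and
    (eventually_all.2 fun i => eventually_all.2 (hlt i))).exists

theorem ball_one_inter_ball_one_nonempty_iff {E : Type*} [NormedAddCommGroup E]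
    [NormedSpace ℝ E] {a b : E} : (ball a 1 ∩ ball b 1).Nonempty ↔ dist a b < 2 := by
  rw [← Set.not_disjoint_iff_nonempty_inter, disjoint_ball_ball_iff one_pos one_pos, not_le,
    one_add_one_eq_two]

theorem Pairwise.injective_of_le_dist {ι X : Type*} [PseudoMetricSpace X] {p : ι → X} {r : ℝ}
    (hr : 0 < r) (hp : Pairwise fun i j => r ≤ dist (p i) (p j)) : Injective p := fun i j hij =>
  by_contra fun hne => (hp hne).not_gt (by rwa [hij, dist_self])

section UnlabeledDepGraph

variable {n : ℕ} {s g : Fin n → EuclideanSpace ℝ (Fin 2)}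

@[simp]
theorem unlabeledDepGraph_adj_inl_inr {i j : Fin n} :
    (unlabeledDepGraph n s g).Adj (.inl i) (.inr j) ↔ dist (s i) (g j) < 2 := by
  simp [unlabeledDepGraph, ball_one_inter_ball_one_nonempty_iff]

@[simp]
theorem unlabeledDepGraph_adj_inr_inl {i j : Fin n} :
    (unlabeledDepGraph n s g).Adj (.inr j) (.inl i) ↔ dist (s i) (g j) < 2 := by
  rw [SimpleGraph.adj_comm, unlabeledDepGraph_adj_inl_inr]

theorem unlabeledDepGraph_isLeft_ne_of_adj {u v : Fin n ⊕ Fin n}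
    (h : (unlabeledDepGraph n s g).Adj u v) : u.isLeft ≠ v.isLeft := by
  obtain ⟨i, j, ⟨rfl, rfl⟩ | ⟨rfl, rfl⟩, -⟩ := h <;> simp

@[simp]
theorem unlabeledDepGraph_not_adj_inl_inl {i i' : Fin n} :
    ¬(unlabeledDepGraph n s g).Adj (.inl i) (.inl i') :=
  fun h => unlabeledDepGraph_isLeft_ne_of_adj h rfl

@[simp]
theorem unlabeledDepGraph_not_adj_inr_inr {j j' : Fin n} :
    ¬(unlabeledDepGraph n s g).Adj (.inr j) (.inr j') :=
  fun h => unlabeledDepGraph_isLeft_ne_of_adj h rfl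

theorem unlabeledDepGraph_colorable_two : (unlabeledDepGraph n s g).Colorable 2 :=
  (SimpleGraph.Coloring.mk Sum.isLeft unlabeledDepGraph_isLeft_ne_of_adj).colorable

theorem unlabeledDepGraph_ncard_neighborSet_le_five
    (hs : Pairwise fun i j => 2 ≤ dist (s i) (s j)) (hg : Pairwise fun i j => 2 ≤ dist (g i) (g j))
    (v : Fin n ⊕ Fin n) : ((unlabeledDepGraph n s g).neighborSet v).ncard ≤ 5 := by
  rcases v with i | j
  · have : (unlabeledDepGraph n s g).neighborSet (.inl i) =
        .inr '' {j | dist (g j) (s i) < 2} := by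
      ext (_ | _) <;> simp [dist_comm]
    rw [this, Set.ncard_image_of_injective _ Sum.inr_injective]
    exact ncard_setOf_dist_lt_le_five _ _ hg
  · have : (unlabeledDepGraph n s g).neighborSet (.inr j) =
        .inl '' {i | dist (s i) (g j) < 2} := by
      ext (_ | _) <;> simp
    rw [this, Set.ncard_image_of_injective _ Sum.inl_injective]
    exact ncard_setOf_dist_lt_le_five _ _ hs

theorem unlabeledDepGraph_hasPlanarEmbedding (hs : Pairwise fun i j => 2 ≤ dist (s i) (s j))
    (hg : Pairwise fun i j => 2 ≤ dist (g i) (g j)) :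
    HasPlanarEmbedding (unlabeledDepGraph n s g) := by
  obtain ⟨t, hne, hlt⟩ := exists_translate_ne_preserving_dist_lt s g 2
  let e := (EuclideanSpace.equiv (Fin 2) ℝ).trans (ContinuousLinearEquiv.finTwoArrow ℝ ℝ)
  refine hasPlanarEmbedding_of_bicolored (e : _ →L[ℝ] ℝ × ℝ) e.injective
    (c := Sum.elim s (g · + t)) (col := Sum.isLeft) (r := 2) ?_ ?_ ?_
  · exact (hs.injective_of_le_dist two_pos).sumElim
      ((add_left_injective t).comp (hg.injective_of_le_dist two_pos)) hne
  · rintro (i | j) (i' | j') huw hcol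
    · exact hs fun h => huw (congrArg _ h)
    · cases hcol
    · cases hcol
    · simpa only [Sum.elim_inr, dist_add_right] using hg fun h => huw (congrArg _ h)
  · intro u v huv
    refine ⟨unlabeledDepGraph_isLeft_ne_of_adj huv, ?_⟩
    rcases u with i | j <;> rcases v with i' | j'
    · exact absurd huv unlabeledDepGraph_not_adj_inl_inl
    · exact hlt i j' (unlabeledDepGraph_adj_inl_inr.1 huv)
    · exact dist_comm (s i') _ ▸ hlt i' j (unlabeledDepGraph_adj_inr_inl.1 huv)
    · exact absurd huv unlabeledDepGraph_not_adj_inr_inr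

end UnlabeledDepGraph

/-- The unlabeled dependency graph of a tabletop rearrangement instance
with identical (unit) cylinders — each of the start and goal arrangements consisting of
pairwise non-overlapping unit disks — is a planar bipartite graph with maximum degree
at most `5`. -/
theorem unlabeledDepGraph_planar_bipartite_maxDegree_le_five (n : ℕ)
    (s g : Fin n → EuclideanSpace ℝ (Fin 2))
    (hs : Pairwise fun i j => Disjoint (Metric.ball (s i) 1) (Metric.ball (s j) 1))
    (hg : Pairwise fun i j => Disjoint (Metric.ball (g i) 1) (Metric.ball (g j) 1)) :
    HasPlanarEmbedding (unlabeledDepGraph n s g) ∧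
    (unlabeledDepGraph n s g).Colorable 2 ∧
    (∀ v, {w | (unlabeledDepGraph n s g).Adj v w}.ncard ≤ 5) := by
  have two_le_dist {a b : EuclideanSpace ℝ (Fin 2)} (h : Disjoint (ball a 1) (ball b 1)) :
      2 ≤ dist a b := by
    rwa [disjoint_ball_ball_iff one_pos one_pos, one_add_one_eq_two] at h
  have hs2 := hs.mono fun _ _ => two_le_dist
  have hg2 := hg.mono fun _ _ => two_le_dist
  exact ⟨unlabeledDepGraph_hasPlanarEmbedding hs2 hg2, unlabeledDepGraph_colorable_two,
    unlabeledDepGraph_ncard_neighborSet_le_five hs2 hg2⟩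
end

section
/- For any undirected graph G and any linear ordering φ of its vertices, the running buffer size of the bidirected dependency graph of G under φ satisfies VS(G, φ) ≤ RB(G^ℓ, φ) ≤ VS(G, φ) + 1. -/
/-- The set of buffered vertices when the vertices in `S` have been processed:
vertices in `S` with an out-arc to an unprocessed vertex. -/
def bufferSet {V : Type*} [Fintype V] [DecidableEq V] (arc : V → V → Prop) [DecidableRel arc]
    (S : Finset V) : Finset V :=
  S.filter (fun u => ∃ v, v ∉ S ∧ arc u v)

/-- The running buffer size of the ordering `l` on the digraph with arc relation `arc`:
the peak buffer occupancy, accounting for the momentary extra buffer slot when the newly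
processed vertex itself enters the buffer before previously buffered vertices exit. -/
def RB {V : Type*} [Fintype V] [DecidableEq V] (arc : V → V → Prop) [DecidableRel arc]
    (l : List V) : ℕ :=
  (List.range l.length).foldl
    (fun m k =>
      let Sold := (l.take k).toFinset
      let Snew := (l.take (k + 1)).toFinset
      let tc : ℕ := if Snew \ Sold ⊆ bufferSet arc Snew then 1 else 0
      max m (max (bufferSet arc Snew).card ((bufferSet arc Sold).card + tc))) 0

/-- The minimum running buffer of a digraph: minimum of `RB` over all linear orderings. -/
noncomputable def MRB {V : Type*} [Fintype V] [DecidableEq V] (arc : V → V → Prop)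
    [DecidableRel arc] : ℕ :=
  sInf {k | ∃ l : List V, l.Nodup ∧ (∀ v, v ∈ l) ∧ RB arc l = k}
/-- The vertex separation value of a linear ordering `l` for the adjacency relation `adj`. -/
def VS {V : Type*} [Fintype V] [DecidableEq V] (adj : V → V → Prop) [DecidableRel adj]
    (l : List V) : ℕ :=
  (List.range l.length).foldl
    (fun m k => max m (bufferSet adj ((l.take (k + 1)).toFinset)).card) 0

/-- The vertex separation number: minimum of `VS` over all linear orderings. -/
noncomputable def MinVS {V : Type*} [Fintype V] [DecidableEq V] (adj : V → V → Prop)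
    [DecidableRel adj] : ℕ :=
  sInf {k | ∃ l : List V, l.Nodup ∧ (∀ v, v ∈ l) ∧ VS adj l = k}

/-!
At step `k` the running buffer is the larger of the buffer after the step, which is a term of
`VS`, and the buffer before the step plus at most one transient slot; the buffer before the
step is itself a term of `VS` (or empty when `k = 0`).
-/

theorem List.foldl_max_le_iff {ι α : Type*} [LinearOrder α] (f : ι → α) (L : List ι)
    (a c : α) : L.foldl (fun m k => max m (f k)) a ≤ c ↔ a ≤ c ∧ ∀ k ∈ L, f k ≤ c := by
  induction L generalizing a with
  | nil => simp
  | cons k L ih => simp [ih, and_assoc]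

section

variable {V : Type*} [Fintype V] [DecidableEq V] (arc : V → V → Prop) [DecidableRel arc]
  (l : List V)

theorem vs_le_iff {c : ℕ} :
    VS arc l ≤ c ↔ ∀ k < l.length, (bufferSet arc (l.take (k + 1)).toFinset).card ≤ c := by
  simp [VS, List.foldl_max_le_iff]

theorem rb_le_iff {c : ℕ} :
    RB arc l ≤ c ↔ ∀ k < l.length,
      (bufferSet arc (l.take (k + 1)).toFinset).card ≤ c ∧
      (bufferSet arc (l.take k).toFinset).card +
        (if (l.take (k + 1)).toFinset \ (l.take k).toFinset ⊆
          bufferSet arc (l.take (k + 1)).toFinset then 1 else 0) ≤ c := by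
  simp [RB, List.foldl_max_le_iff]

theorem card_bufferSet_take_le_vs {k : ℕ} (hk : k ≤ l.length) :
    (bufferSet arc (l.take k).toFinset).card ≤ VS arc l := by
  cases k with
  | zero => simp [bufferSet]
  | succ j => exact (vs_le_iff arc l).mp le_rfl j hk

theorem vs_le_rb : VS arc l ≤ RB arc l :=
  (vs_le_iff arc l).mpr fun k hk => ((rb_le_iff arc l).mp le_rfl k hk).1

theorem rb_le_vs_add_one : RB arc l ≤ VS arc l + 1 := by
  refine (rb_le_iff arc l).mpr fun k hk => ⟨?_, ?_⟩
  · exact (card_bufferSet_take_le_vs arc l hk).trans (Nat.le_succ _)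
  · have hbefore := card_bufferSet_take_le_vs arc l hk.le
    split <;> omega

end

theorem vs_le_rb_le_vs_add_one_general {V : Type*} [Fintype V] [DecidableEq V]
    (G : SimpleGraph V) [DecidableRel G.Adj] (l : List V) :
    VS G.Adj l ≤ RB G.Adj l ∧ RB G.Adj l ≤ VS G.Adj l + 1 :=
  ⟨vs_le_rb G.Adj l, rb_le_vs_add_one G.Adj l⟩

/-- For any undirected graph `G` and any linear ordering of its vertices,
the running buffer size of the bidirected dependency graph `G^ℓ` (whose arc relation is
`G.Adj`) satisfies `VS(G, φ) ≤ RB(G^ℓ, φ) ≤ VS(G, φ) + 1`. -/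
theorem vs_le_rb_le_vs_add_one {V : Type*} [Fintype V] [DecidableEq V]
    (G : SimpleGraph V) [DecidableRel G.Adj] (l : List V)
    (hnodup : l.Nodup) (hcomplete : ∀ v, v ∈ l) :
    VS G.Adj l ≤ RB G.Adj l ∧ RB G.Adj l ≤ VS G.Adj l + 1 :=
  vs_le_rb_le_vs_add_one_general G l
end

section
/- Computing the minimum running buffer size MRB(G) of a directed dependency graph G is NP-hard; in particular, if there is a polynomial-time algorithm computing an ordering φ with RB(G, φ) ≤ MRB(G) + α for a constant α, then the vertex separation number admits a polynomial-time absolute approximation within α + 1. -/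
theorem List.le_foldl_max {ι α : Type*} [LinearOrder α] (f : ι → α) {L : List ι}
    (a : α) {k : ι} (hk : k ∈ L) : f k ≤ L.foldl (fun m k => max m (f k)) a :=
  ((List.foldl_max_le_iff f L a _).1 le_rfl).2 k hk

section
variable {V : Type*} [Fintype V] [DecidableEq V] (arc : V → V → Prop) [DecidableRel arc]

theorem card_bufferSet_take_le_VS (l : List V) {k : ℕ} (hk : k ≤ l.length) :
    (bufferSet arc (l.take k).toFinset).card ≤ VS arc l := by
  cases k with
  | zero => simp [bufferSet]
  | succ j =>
    exact List.le_foldl_max (fun k => (bufferSet arc (l.take (k + 1)).toFinset).card) 0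
      (List.mem_range.2 hk)

theorem VS_le_RB (l : List V) : VS arc l ≤ RB arc l := by
  refine (List.foldl_max_le_iff _ _ _ _).2 ⟨Nat.zero_le _, fun k hk => ?_⟩
  refine le_trans ?_ (List.le_foldl_max _ 0 hk)
  exact le_max_left _ _

theorem RB_le_VS_add_one (l : List V) : RB arc l ≤ VS arc l + 1 := by
  refine (List.foldl_max_le_iff _ _ _ _).2 ⟨Nat.zero_le _, fun k hk => ?_⟩
  have hk_lt := List.mem_range.1 hk
  have hnew := card_bufferSet_take_le_VS arc l (k := k + 1) hk_lt
  have hold := card_bufferSet_take_le_VS arc l hk_lt.le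
  refine max_le (by omega) (add_le_add hold ?_)
  split <;> simp

theorem MRB_le_MinVS_add_one : MRB arc ≤ MinVS arc + 1 := by
  have hne : {k | ∃ l : List V, l.Nodup ∧ (∀ v, v ∈ l) ∧ VS arc l = k}.Nonempty :=
    ⟨_, Finset.univ.toList, Finset.nodup_toList _, by simp, rfl⟩
  obtain ⟨l₀, hnodup, hcomplete, hVS⟩ := Nat.sInf_mem hne
  calc MRB arc ≤ RB arc l₀ := Nat.sInf_le ⟨l₀, hnodup, hcomplete, rfl⟩
    _ ≤ VS arc l₀ + 1 := RB_le_VS_add_one arc l₀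
    _ = MinVS arc + 1 := by rw [hVS]; rfl

end

theorem mrb_absolute_approx_gives_vs_absolute_approx_general {V : Type*} [Fintype V] [DecidableEq V]
    (G : SimpleGraph V) [DecidableRel G.Adj] (α : ℕ) (l : List V)
    (happrox : RB G.Adj l ≤ MRB G.Adj + α) :
    VS G.Adj l ≤ MinVS G.Adj + α + 1 :=
  calc VS G.Adj l ≤ RB G.Adj l := VS_le_RB G.Adj l
    _ ≤ MRB G.Adj + α := happrox
    _ ≤ MinVS G.Adj + 1 + α := by gcongr; exact MRB_le_MinVS_add_one G.Adj
    _ = MinVS G.Adj + α + 1 := by ring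

/-- hardness reduction. If an ordering `φ` approximates the minimum
running buffer of the bidirected dependency graph `G^ℓ` of an undirected graph `G`
within an additive constant `α` (as a polynomial-time algorithm would produce),
then the same ordering approximates the vertex separation number of `G` within `α + 1`.
Since absolute approximation of vertex separation is NP-hard, computing (or absolutely
approximating) MRB of a dependency graph is NP-hard. -/
theorem mrb_absolute_approx_gives_vs_absolute_approx {V : Type*} [Fintype V] [DecidableEq V]
    (G : SimpleGraph V) [DecidableRel G.Adj] (α : ℕ) (l : List V)
    (hnodup : l.Nodup) (hcomplete : ∀ v, v ∈ l)
    (happrox : RB G.Adj l ≤ MRB G.Adj + α) :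
    VS G.Adj l ≤ MinVS G.Adj + α + 1 :=
  mrb_absolute_approx_gives_vs_absolute_approx_general G α l happrox
end

section
/- For any directed graph G, MRB(G) is at most the size of a minimum feedback vertex set of G. -/
/-- A directed graph (arc relation) is acyclic if no vertex lies on a directed cycle. -/
def IsAcyclicRel {V : Type*} (arc : V → V → Prop) : Prop :=
  ∀ v, ¬ Relation.TransGen arc v v

/-- `F` is a feedback vertex set: removing `F` leaves the digraph acyclic. -/
def IsFVS {V : Type*} [DecidableEq V] (arc : V → V → Prop) (F : Finset V) : Prop :=
  IsAcyclicRel (fun u v => u ∉ F ∧ v ∉ F ∧ arc u v)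

/-!
Keep only the arcs leaving vertices outside `F`. Any cycle of this digraph avoids `F`, so it is
acyclic and has a reverse topological order: every out-neighbour of a vertex outside `F` is
handled before it. In that order a vertex outside `F` never waits in the buffer, so the buffer
is always a subset of `F`, also at the moment a new vertex of `F` enters it.
-/

section Acyclic

variable {V : Type*} {r : V → V → Prop}

theorem IsAcyclicRel.exists_sink [Finite V] (hr : IsAcyclicRel r) {T : Finset V}
    (hT : T.Nonempty) : ∃ u ∈ T, ∀ v ∈ T, ¬ r u v := by
  have : IsTrans V (flip (Relation.TransGen r)) := ⟨fun _ _ _ hab hbc => hbc.trans hab⟩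
  have : Std.Irrefl (flip (Relation.TransGen r)) := ⟨hr⟩
  obtain ⟨u, huT, hmin⟩ :=
    (Finite.wellFounded_of_trans_of_irrefl (flip (Relation.TransGen r))).has_min _ hT
  exact ⟨u, huT, fun v hv huv => hmin v hv (.single huv)⟩

theorem IsAcyclicRel.exists_nodup_pairwise [Finite V] [DecidableEq V] (hr : IsAcyclicRel r)
    (T : Finset V) : ∃ l : List V, l.Nodup ∧ l.toFinset = T ∧ l.Pairwise fun u v => ¬ r u v := by
  induction T using Finset.strongInduction with
  | _ T ih =>
    rcases T.eq_empty_or_nonempty with rfl | hT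
    · exact ⟨[], List.nodup_nil, rfl, List.Pairwise.nil⟩
    obtain ⟨u, huT, hsink⟩ := hr.exists_sink hT
    obtain ⟨l, hnd, hlT, hl⟩ := ih (T.erase u) (Finset.erase_ssubset huT)
    have hu : u ∉ l := fun h => by simpa [hlT] using List.mem_toFinset.2 h
    refine ⟨u :: l, List.nodup_cons.2 ⟨hu, hnd⟩, ?_, List.pairwise_cons.2 ⟨?_, hl⟩⟩
    · simp [hlT, Finset.insert_erase huT]
    · exact fun v hv => hsink v (Finset.mem_of_mem_erase (hlT ▸ List.mem_toFinset.2 hv))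

end Acyclic

theorem IsFVS.isAcyclicRel_out {V : Type*} [DecidableEq V] {arc : V → V → Prop}
    {F : Finset V} (hF : IsFVS arc F) : IsAcyclicRel fun u v => u ∉ F ∧ arc u v := by
  have transGen_deleteF : ∀ {a b}, Relation.TransGen (fun u v => u ∉ F ∧ arc u v) a b → b ∉ F →
      Relation.TransGen (fun u v => u ∉ F ∧ v ∉ F ∧ arc u v) a b := by
    intro a b h hb
    induction h with
    | single h => exact .single ⟨h.1, hb, h.2⟩
    | tail _ h ih => exact .tail (ih h.1) ⟨h.1, hb, h.2⟩
  intro v h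
  obtain ⟨_, ⟨hv, _⟩, _⟩ := Relation.TransGen.head'_iff.1 h
  exact hF v (transGen_deleteF h hv)

section Buffer

variable {V : Type*} [Fintype V] [DecidableEq V] {arc : V → V → Prop} [DecidableRel arc]
  {F : Finset V}

theorem bufferSet_take_subset {l : List V} (hl : ∀ v, v ∈ l)
    (hpair : l.Pairwise fun u v => ¬ (u ∉ F ∧ arc u v)) (k : ℕ) :
    bufferSet arc (l.take k).toFinset ⊆ F := by
  intro u hu
  obtain ⟨hu, v, hv, huv⟩ := Finset.mem_filter.1 hu
  have hsplit := List.take_append_drop k l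
  have hv : v ∈ l.drop k := by
    have := hl v
    rw [← hsplit, List.mem_append] at this
    exact this.resolve_left (mt List.mem_toFinset.2 hv)
  rw [← hsplit, List.pairwise_append] at hpair
  by_contra huF
  exact hpair.2.2 u (List.mem_toFinset.1 hu) v hv ⟨huF, huv⟩

theorem card_bufferSet_lt_card {S : Finset V} {w : V} (hS : bufferSet arc S ⊆ F) (hwS : w ∉ S)
    (hwF : w ∈ F) : (bufferSet arc S).card < F.card :=
  Finset.card_lt_card <|
    (Finset.ssubset_iff_of_subset hS).2 ⟨w, hwF, fun h => hwS (Finset.filter_subset _ _ h)⟩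

theorem RB_le_card_of_bufferSet_take_subset {l : List V} (hl : l.Nodup)
    (hF : ∀ k, bufferSet arc (l.take k).toFinset ⊆ F) : RB arc l ≤ F.card := by
  refine List.foldlRecOn (motive := (· ≤ F.card)) _ _ (Nat.zero_le _) fun m hm k hk => ?_
  rw [List.mem_range] at hk
  have hnew : l[k] ∉ l.take k := by
    have := (List.take_append_getElem hk).symm ▸ hl.sublist (List.take_sublist (k + 1) l)
    exact fun h => (List.nodup_append.1 this).2.2 _ h _ (List.mem_singleton_self _) rfl
  refine max_le hm (max_le (Finset.card_le_card (hF _)) ?_)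
  split_ifs with hsub
  · refine card_bufferSet_lt_card (hF k) (mt List.mem_toFinset.1 hnew) (hF (k + 1) (hsub ?_))
    rw [Finset.mem_sdiff, List.mem_toFinset, List.mem_toFinset, ← List.take_append_getElem hk]
    exact ⟨List.mem_append_right _ (List.mem_singleton_self _), hnew⟩
  · exact Finset.card_le_card (hF k)

end Buffer

/-- For any directed graph, the minimum running buffer is at most the
size of any (hence of a minimum) feedback vertex set. -/
theorem mrb_le_fvs_card {V : Type*} [Fintype V] [DecidableEq V]
    (arc : V → V → Prop) [DecidableRel arc] (F : Finset V) (hF : IsFVS arc F) :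
    MRB arc ≤ F.card := by
  obtain ⟨l, hnd, hl_univ, hpair⟩ := hF.isAcyclicRel_out.exists_nodup_pairwise Finset.univ
  have hl : ∀ v, v ∈ l := fun v => List.mem_toFinset.1 (hl_univ ▸ Finset.mem_univ v)
  calc MRB arc ≤ RB arc l := Nat.sInf_le ⟨l, hnd, hl, rfl⟩
    _ ≤ F.card := RB_le_card_of_bufferSet_take_subset hnd (bufferSet_take_subset hl hpair)
end

section
/- In the dependency grid D(m, 2m), for any two adjacent columns i and i+1 (1 ≤ i < m), if the number of filled goal vertices in these two columns satisfies 0 < f_i + f_{i+1} < 2m, then the number of cleared start vertices in these two columns satisfies c_i + c_{i+1} ≥ 1. -/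
/-!
Suppose no start vertex of columns `i`, `i + 1` is cleared. Then a filled goal forces every
adjacent start of the two columns to be removed, hence the goal paired with that start to be
filled. Inside one row of vertex pairs `p_{i,j}`, `p_{i+1,j}` this fills the other goal
(through the horizontal neighbour); from one row of pairs to the next it fills a goal of the
adjacent row (through the vertical neighbour lying in that row). So a single filled goal fills
all `2m` goals of the two columns, contradicting `f i + f (i + 1) < 2m`.
-/

namespace DependencyGrid

/-- The constraint on a configuration of the dependency grid `D(w, h)`. -/
def GoalConstraint (w h : ℕ) (filled removed : ℕ × ℕ → Prop) : Prop :=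
  ∀ x y, 1 ≤ x → x ≤ w → 1 ≤ y → y ≤ h → (x + y) % 2 = 1 → filled (x, y) →
    ∀ x' y', 1 ≤ x' → x' ≤ w → 1 ≤ y' → y' ≤ h →
      ((x' = x ∧ (y' = y + 1 ∨ y' + 1 = y)) ∨ (y' = y ∧ (x' = x + 1 ∨ x' + 1 = x))) →
      removed (x', y')

/-- The other row of the vertex pair containing row `y`. -/
def pairMate (y : ℕ) : ℕ := if y % 2 = 1 then y + 1 else y - 1

theorem pairMate_two_mul_add_one (j : ℕ) : pairMate (2 * j + 1) = 2 * j + 2 := by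
  simp [pairMate]

theorem pairMate_two_mul_add_two (j : ℕ) : pairMate (2 * j + 2) = 2 * j + 1 := by
  simp [pairMate]

def NoClearedIn (n : ℕ) (filled removed : ℕ × ℕ → Prop) (x : ℕ) : Prop :=
  ∀ y, 1 ≤ y → y ≤ 2 * n → (x + y) % 2 = 0 → removed (x, y) → filled (x, pairMate y)

theorem noClearedIn_of_card_eq_zero {n x : ℕ} {filled removed : ℕ × ℕ → Prop}
    [DecidablePred filled] [DecidablePred removed]
    (h : ((Finset.Icc 1 (2 * n)).filter (fun y => (x + y) % 2 = 0 ∧ removed (x, y) ∧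
      ¬ filled (x, pairMate y))).card = 0) :
    NoClearedIn n filled removed x := by
  intro y hy1 hy2 hstart hrem
  by_contra hnf
  exact Finset.filter_eq_empty_iff.mp (Finset.card_eq_zero.mp h)
    (Finset.mem_Icc.mpr ⟨hy1, hy2⟩) ⟨hstart, hrem, hnf⟩

theorem forall_lt_of_iff_succ {P : ℕ → Prop} {n j₀ : ℕ}
    (hstep : ∀ j, j + 1 < n → (P j ↔ P (j + 1))) (hj₀ : j₀ < n) (h : P j₀) :
    ∀ j < n, P j := by
  have hP0 : ∀ j < n, (P j ↔ P 0) := by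
    intro j hj
    induction j with
    | zero => rfl
    | succ j ih => exact (hstep j hj).symm.trans (ih (by omega))
  exact fun j hj => (hP0 j hj).2 ((hP0 j₀ hj₀).1 h)

structure NoClearedStrip (w n : ℕ) (filled removed : ℕ × ℕ → Prop) (i : ℕ) : Prop where
  constraint : GoalConstraint w (2 * n) filled removed
  one_le : 1 ≤ i
  succ_le : i + 1 ≤ w
  left : NoClearedIn n filled removed i
  right : NoClearedIn n filled removed (i + 1)

/-- `j` is 0-based: these are the goals of the vertex pairs `p_{i,j+1}` and `p_{i+1,j+1}`. -/
def RowPairFilled (filled : ℕ × ℕ → Prop) (i j : ℕ) : Prop :=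
  ∀ x y, (x = i ∨ x = i + 1) → (y = 2 * j + 1 ∨ y = 2 * j + 2) → (x + y) % 2 = 1 →
    filled (x, y)

theorem exists_goal_in_strip (i y : ℕ) : ∃ x, (x = i ∨ x = i + 1) ∧ (x + y) % 2 = 1 := by
  rcases Nat.mod_two_eq_zero_or_one (i + y) with h | h
  exacts [⟨i + 1, .inr rfl, by omega⟩, ⟨i, .inl rfl, h⟩]

namespace NoClearedStrip

variable {w n i : ℕ} {filled removed : ℕ × ℕ → Prop}

theorem filled_pairMate (hS : NoClearedStrip w n filled removed i) {x y x' y' : ℕ}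
    (hx : x = i ∨ x = i + 1) (hy1 : 1 ≤ y) (hy2 : y ≤ 2 * n) (hgoal : (x + y) % 2 = 1)
    (hfilled : filled (x, y)) (hx' : x' = i ∨ x' = i + 1) (hy1' : 1 ≤ y') (hy2' : y' ≤ 2 * n)
    (hadj : (x' = x ∧ (y' = y + 1 ∨ y' + 1 = y)) ∨ (y' = y ∧ (x' = x + 1 ∨ x' + 1 = x))) :
    filled (x', pairMate y') := by
  have hrem := hS.constraint x y (by have := hS.one_le; omega) (by have := hS.succ_le; omega)
    hy1 hy2 hgoal hfilled x' y' (by have := hS.one_le; omega) (by have := hS.succ_le; omega)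
    hy1' hy2' hadj
  rcases hx' with rfl | rfl
  · exact hS.left y' hy1' hy2' (by omega) hrem
  · exact hS.right y' hy1' hy2' (by omega) hrem

theorem rowPairFilled_of_filled (hS : NoClearedStrip w n filled removed i) {x y j : ℕ}
    (hx : x = i ∨ x = i + 1) (hy : y = 2 * j + 1 ∨ y = 2 * j + 2) (hj : j < n)
    (hgoal : (x + y) % 2 = 1) (hfilled : filled (x, y)) : RowPairFilled filled i j := by
  intro x' y' hx' hy' hgoal'
  by_cases hxx : x' = x
  · obtain rfl : y' = y := by omega
    rwa [hxx]
  · have hmate : y' = pairMate y := by unfold pairMate; split_ifs <;> omega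
    rw [hmate]
    exact hS.filled_pairMate hx (by omega) (by omega) hgoal hfilled hx' (by omega) (by omega)
      (.inr ⟨rfl, by omega⟩)

theorem rowPairFilled_iff_succ (hS : NoClearedStrip w n filled removed i) {j : ℕ}
    (hj : j + 1 < n) : RowPairFilled filled i j ↔ RowPairFilled filled i (j + 1) := by
  constructor
  · intro hrow
    obtain ⟨x, hx, hgoal⟩ := exists_goal_in_strip i (2 * j + 2)
    have hup := hS.filled_pairMate hx (by omega) (by omega) hgoal
      (hrow x _ hx (.inr rfl) hgoal) hx (y' := 2 * (j + 1) + 1) (by omega) (by omega) (by omega)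
    rw [pairMate_two_mul_add_one] at hup
    exact hS.rowPairFilled_of_filled hx (.inr rfl) hj (by omega) hup
  · intro hrow
    obtain ⟨x, hx, hgoal⟩ := exists_goal_in_strip i (2 * (j + 1) + 1)
    have hdown := hS.filled_pairMate hx (by omega) (by omega) hgoal
      (hrow x _ hx (.inl rfl) hgoal) hx (y' := 2 * j + 2) (by omega) (by omega) (by omega)
    rw [pairMate_two_mul_add_two] at hdown
    exact hS.rowPairFilled_of_filled hx (.inl rfl) (by omega) (by omega) hdown

end NoClearedStrip

theorem two_mul_le_card_filled {n i : ℕ} {filled : ℕ × ℕ → Prop} [DecidablePred filled]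
    (hall : ∀ j < n, RowPairFilled filled i j) :
    2 * n ≤ ((Finset.Icc 1 (2 * n)).filter (fun y => (i + y) % 2 = 1 ∧ filled (i, y))).card +
      ((Finset.Icc 1 (2 * n)).filter
        (fun y => (i + 1 + y) % 2 = 1 ∧ filled (i + 1, y))).card := by
  have hcover : Finset.Icc 1 (2 * n) ⊆
      (Finset.Icc 1 (2 * n)).filter (fun y => (i + y) % 2 = 1 ∧ filled (i, y)) ∪
      (Finset.Icc 1 (2 * n)).filter (fun y => (i + 1 + y) % 2 = 1 ∧ filled (i + 1, y)) := by
    intro y hy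
    rw [Finset.mem_Icc] at hy
    have hrow := hall ((y - 1) / 2) (by omega)
    simp only [Finset.mem_union, Finset.mem_filter, Finset.mem_Icc]
    rcases Nat.mod_two_eq_zero_or_one (i + y) with h | h
    · exact .inr ⟨hy, by omega, hrow _ _ (.inr rfl) (by omega) (by omega)⟩
    · exact .inl ⟨hy, h, hrow _ _ (.inl rfl) (by omega) h⟩
  simpa using (Finset.card_le_card hcover).trans (Finset.card_union_le _ _)

end DependencyGrid

open DependencyGrid

/-- In the dependency grid `D(m, 2m)` — cells `(x, y)` with
`1 ≤ x ≤ m`, `1 ≤ y ≤ 2m`, where cells with `x + y` even are start vertices and cells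
with `x + y` odd are goal vertices, and where the vertex pair `p_{i,j}` consists of the
cells `(i, 2j-1)` and `(i, 2j)` — consider any configuration given by predicates
`filled` (on goal vertices) and `removed` (on start vertices) satisfying the constraint
that a goal vertex can be filled only if all its grid-neighboring start vertices are
removed.  A start vertex is *cleared* if it is removed but the goal vertex of its
vertex pair is unfilled; `f i` and `c i` count filled goals and cleared starts in
column `i`.  Then for any two adjacent columns `i` and `i+1` (`1 ≤ i < m`), if
`0 < f i + f (i+1) < 2m`, then `c i + c (i+1) ≥ 1`. -/
theorem dependency_grid_adjacent_columns (m : ℕ)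
    (filled removed : ℕ × ℕ → Prop) [DecidablePred filled] [DecidablePred removed]
    -- a goal can be filled only if all grid-adjacent start vertices are removed:
    (hconstraint : ∀ x y, 1 ≤ x → x ≤ m → 1 ≤ y → y ≤ 2 * m → (x + y) % 2 = 1 →
      filled (x, y) →
      ∀ x' y', 1 ≤ x' → x' ≤ m → 1 ≤ y' → y' ≤ 2 * m →
        ((x' = x ∧ (y' = y + 1 ∨ y' + 1 = y)) ∨ (y' = y ∧ (x' = x + 1 ∨ x' + 1 = x))) →
        removed (x', y'))
    -- `f i`: number of filled goal vertices in column `i`: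
    (f : ℕ → ℕ)
    (hf : ∀ i, f i =
      ((Finset.Icc 1 (2 * m)).filter (fun y => (i + y) % 2 = 1 ∧ filled (i, y))).card)
    -- `c i`: number of cleared start vertices in column `i` (removed, but the goal
    -- vertex of its vertex pair is unfilled):
    (c : ℕ → ℕ)
    (hc : ∀ i, c i =
      ((Finset.Icc 1 (2 * m)).filter (fun y => (i + y) % 2 = 0 ∧ removed (i, y) ∧
        ¬ filled (i, if y % 2 = 1 then y + 1 else y - 1))).card) :
    ∀ i, 1 ≤ i → i < m → 0 < f i + f (i + 1) → f i + f (i + 1) < 2 * m →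
      1 ≤ c i + c (i + 1) := by
  intro i hi him hpos hlt
  by_contra hcleared
  have hS : NoClearedStrip m m filled removed i :=
    { constraint := hconstraint, one_le := hi, succ_le := him
      left := noClearedIn_of_card_eq_zero ((hc i).symm.trans (by omega))
      right := noClearedIn_of_card_eq_zero ((hc (i + 1)).symm.trans (by omega)) }
  obtain ⟨x, y, hx, hy, hgoal, hfilled⟩ : ∃ x y, (x = i ∨ x = i + 1) ∧
      y ∈ Finset.Icc 1 (2 * m) ∧ (x + y) % 2 = 1 ∧ filled (x, y) := by
    rcases Nat.add_pos_iff_pos_or_pos.mp hpos with h | h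
    · obtain ⟨y, hy⟩ := Finset.card_pos.mp (hf i ▸ h)
      exact ⟨i, y, .inl rfl, Finset.mem_filter.mp hy⟩
    · obtain ⟨y, hy⟩ := Finset.card_pos.mp (hf (i + 1) ▸ h)
      exact ⟨i + 1, y, .inr rfl, Finset.mem_filter.mp hy⟩
  rw [Finset.mem_Icc] at hy
  have hall : ∀ j < m, RowPairFilled filled i j :=
    forall_lt_of_iff_succ (fun _ hj => hS.rowPairFilled_iff_succ hj) (j₀ := (y - 1) / 2)
      (by omega) (hS.rowPairFilled_of_filled hx (by omega) (by omega) hgoal hfilled)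
  have := two_mul_le_card_filled hall
  rw [hf, hf] at hlt
  omega
end

section
/- In a bipartite unlabeled dependency graph, filling a 'free goal' (a goal vertex with at most one remaining neighbor) first never increases the optimal running buffer: if the remaining dependency graph has a free goal g, then there exists an optimal plan that fills g next. -/
/-- A pick-n-place move in an unlabeled rearrangement instance with start vertices `S`
and goal vertices `G`: move the object at start `s` to the buffer, move a buffered
object to goal `g`, or move the object at start `s` directly to goal `g`. -/
inductive UMove (S G : Type*) where
  | toBuffer (s : S)
  | fromBuffer (g : G)
  | direct (s : S) (g : G)

/-- Effect of a move on the state `(R, F)`, where `R` is the set of start vertices whose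
objects have been removed and `F` is the set of filled goal vertices.  The number of
buffered objects in state `(R, F)` is `R.card - F.card`. -/
def ustep {S G : Type*} [DecidableEq S] [DecidableEq G] :
    UMove S G → Finset S × Finset G → Finset S × Finset G
  | .toBuffer s, (R, F) => (insert s R, F)
  | .fromBuffer g, (R, F) => (R, insert g F)
  | .direct s g, (R, F) => (insert s R, insert g F)

/-- The state reached after executing the moves in `l` from state `st`. -/
def uStateAfter {S G : Type*} [DecidableEq S] [DecidableEq G]
    (l : List (UMove S G)) (st : Finset S × Finset G) : Finset S × Finset G :=
  l.foldl (fun st m => ustep m st) st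

/-- Validity of a sequence of moves from state `st`, for the bipartite dependency
relation `adj` (`adj s g` meaning the disk at start `s` overlaps the disk at goal `g`):
an object can only be removed from a start once; a goal `g` can be filled from the
buffer only if the buffer is nonempty and all starts overlapping `g` have been cleared;
an object can be moved directly from start `s` to goal `g` only if all starts
overlapping `g` other than `s` itself have been cleared. -/
def uValidFrom {S G : Type*} [DecidableEq S] [DecidableEq G] (adj : S → G → Prop) :
    List (UMove S G) → Finset S × Finset G → Prop
  | [], _ => True
  | m :: rest, st =>
      (match m with
        | .toBuffer s => s ∉ st.1
        | .fromBuffer g => g ∉ st.2 ∧ st.2.card < st.1.card ∧ ∀ s, adj s g → s ∈ st.1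
        | .direct s g => s ∉ st.1 ∧ g ∉ st.2 ∧ ∀ s', adj s' g → s' ∈ insert s st.1) ∧
      uValidFrom adj rest (ustep m st)

/-- The peak buffer occupancy along the execution of `l` from state `st`. -/
def uPeakFrom {S G : Type*} [DecidableEq S] [DecidableEq G] :
    List (UMove S G) → Finset S × Finset G → ℕ
  | [], st => st.1.card - st.2.card
  | m :: rest, st => max (st.1.card - st.2.card) (uPeakFrom rest (ustep m st))

/-- A complete plan: a valid sequence of moves from the initial state which removes every
object from its start pose and fills every goal pose. -/
def UCompletePlan {S G : Type*} [DecidableEq S] [DecidableEq G] (adj : S → G → Prop)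
    (l : List (UMove S G)) : Prop :=
  uValidFrom adj l (∅, ∅) ∧
  (∀ s : S, s ∈ (uStateAfter l (∅, ∅)).1) ∧ (∀ g : G, g ∈ (uStateAfter l (∅, ∅)).2)

/-- The running buffer (peak buffer occupancy) of a plan. -/
def uPeak {S G : Type*} [DecidableEq S] [DecidableEq G] (l : List (UMove S G)) : ℕ :=
  uPeakFrom l (∅, ∅)

/-!
Moving the first fill of `g` one step earlier never hurts. If that fill is already enabled
before the preceding move, the two moves commute. Otherwise the preceding move is what enables
it by removing some start `t`: the only start adjacent to `g`, or one whose object is buffered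
and then taken by `g`. In either case move `t`'s object directly onto `g` first, and then
perform the earlier move with the object that `g` would have used (if any). The end state is
unchanged, and since filling a goal never increases the buffer, the new intermediate state holds
no more buffered objects than the state before the pair.
-/

namespace UMove

variable {S G : Type*}

def Fills (g : G) : UMove S G → Prop
  | toBuffer _ => False
  | fromBuffer h => h = g
  | direct _ h => h = g

@[simp] lemma fills_toBuffer (s : S) (g : G) : (toBuffer s : UMove S G).Fills g ↔ False := Iff.rfl
@[simp] lemma fills_fromBuffer (h g : G) : (fromBuffer h : UMove S G).Fills g ↔ h = g := Iff.rfl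
@[simp] lemma fills_direct (s : S) (h g : G) : (direct s h : UMove S G).Fills g ↔ h = g := Iff.rfl

end UMove

section Execution

variable {S G : Type*} [DecidableEq S] [DecidableEq G] {adj : S → G → Prop}

def bufCount (st : Finset S × Finset G) : ℕ := st.1.card - st.2.card

@[simp] lemma uPeakFrom_nil (st : Finset S × Finset G) :
    uPeakFrom ([] : List (UMove S G)) st = bufCount st := rfl

@[simp] lemma uPeakFrom_cons (m : UMove S G) (l : List (UMove S G)) (st) :
    uPeakFrom (m :: l) st = max (bufCount st) (uPeakFrom l (ustep m st)) := rfl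

@[simp] lemma uStateAfter_nil (st : Finset S × Finset G) :
    uStateAfter ([] : List (UMove S G)) st = st := rfl

@[simp] lemma uStateAfter_cons (m : UMove S G) (l : List (UMove S G)) (st) :
    uStateAfter (m :: l) st = uStateAfter l (ustep m st) := rfl

lemma uStateAfter_append (a b : List (UMove S G)) (st) :
    uStateAfter (a ++ b) st = uStateAfter b (uStateAfter a st) :=
  List.foldl_append ..

lemma bufCount_le_uPeakFrom (l : List (UMove S G)) (st) : bufCount st ≤ uPeakFrom l st := by
  cases l <;> simp

lemma uPeakFrom_append (a b : List (UMove S G)) (st) :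
    uPeakFrom (a ++ b) st = max (uPeakFrom a st) (uPeakFrom b (uStateAfter a st)) := by
  induction a generalizing st with
  | nil => simp [bufCount_le_uPeakFrom]
  | cons m t ih => simp [ih, max_assoc]

@[simp] lemma uValidFrom_nil (st : Finset S × Finset G) :
    uValidFrom adj ([] : List (UMove S G)) st := trivial

lemma uValidFrom_append {a b : List (UMove S G)} {st} :
    uValidFrom adj (a ++ b) st ↔ uValidFrom adj a st ∧ uValidFrom adj b (uStateAfter a st) := by
  induction a generalizing st with
  | nil => simp
  | cons m t ih => simp only [List.cons_append, uValidFrom, ih, uStateAfter_cons, and_assoc]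

lemma ustep_comm (m m' : UMove S G) (st) : ustep m (ustep m' st) = ustep m' (ustep m st) := by
  obtain ⟨R, F⟩ := st
  cases m <;> cases m' <;> simp [ustep, Finset.insert_comm]

lemma mem_ustep_snd {m : UMove S G} {g : G} {st : Finset S × Finset G} :
    g ∈ (ustep m st).2 ↔ m.Fills g ∨ g ∈ st.2 := by
  obtain ⟨R, F⟩ := st
  cases m <;> simp [ustep, eq_comm]

lemma bufCount_ustep_le {m : UMove S G} {g : G} (hm : m.Fills g) {st}
    (hv : uValidFrom adj [m] st) : bufCount (ustep m st) ≤ bufCount st := by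
  obtain ⟨R, F⟩ := st
  cases m with
  | toBuffer s => exact hm.elim
  | fromBuffer h =>
    simp only [uValidFrom, ustep, bufCount] at hv ⊢
    rw [Finset.card_insert_of_notMem hv.1.1]; omega
  | direct s h =>
    simp only [uValidFrom, ustep, bufCount] at hv ⊢
    rw [Finset.card_insert_of_notMem hv.1.1, Finset.card_insert_of_notMem hv.1.2.1]; omega

end Execution

section Swap
variable {S G : Type*} [DecidableEq S] [DecidableEq G] {adj : S → G → Prop}

lemma uValidFrom_swap {m f : UMove S G} {st : Finset S × Finset G}
    (hv : uValidFrom adj [m, f] st) (hf : uValidFrom adj [f] st) : uValidFrom adj [f, m] st := by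
  obtain ⟨R, F⟩ := st
  cases m <;> cases f <;> simp only [uValidFrom, ustep, Finset.mem_insert] at hv hf ⊢ <;>
    grind [Finset.card_insert_of_notMem]

lemma exists_fill_first_of_blocked {g : G} (hfree : {s | adj s g}.Subsingleton) {m f : UMove S G}
    (hf : f.Fills g) {st : Finset S × Finset G} (hv : uValidFrom adj [m, f] st)
    (hblocked : ¬ uValidFrom adj [f] st) :
    ∃ a q, a.Fills g ∧ q.length ≤ 1 ∧ uValidFrom adj (a :: q) st ∧
      uStateAfter (a :: q) st = uStateAfter [m, f] st := by
  have hunique : ∀ s t, adj s g → adj t g → s = t := fun s t hs ht => hfree hs ht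
  obtain ⟨R, F⟩ := st
  cases f with
  | toBuffer u => exact hf.elim
  | fromBuffer g' =>
    subst hf
    cases m with
    | toBuffer t =>
      refine ⟨.direct t g', [], rfl, by simp, ?_, by simp [ustep]⟩
      simp_all [uValidFrom, ustep]
    | fromBuffer h =>
      simp only [uValidFrom, ustep, Finset.mem_insert] at hv hblocked
      grind [Finset.card_insert_of_notMem]
    | direct t h =>
      refine ⟨.direct t g', [.fromBuffer h], rfl, by simp, ?_, by simp [ustep, Finset.insert_comm]⟩
      simp only [uValidFrom, ustep, Finset.mem_insert] at hv hblocked ⊢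
      grind [Finset.card_insert_of_notMem]
  | direct u g' =>
    subst hf
    cases m with
    | toBuffer t =>
      refine ⟨.direct t g', [.toBuffer u], rfl, by simp, ?_, by simp [ustep]⟩
      simp only [uValidFrom, ustep, Finset.mem_insert] at hv hblocked ⊢
      grind
    | fromBuffer h =>
      simp only [uValidFrom, ustep, Finset.mem_insert] at hv hblocked
      grind
    | direct t h =>
      refine ⟨.direct t g', [.direct u h], rfl, by simp, ?_, by simp [ustep, Finset.insert_comm]⟩
      simp only [uValidFrom, ustep, Finset.mem_insert] at hv hblocked ⊢
      grind

end Swap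

section PullForward
variable {S G : Type*} [DecidableEq S] [DecidableEq G] {adj : S → G → Prop}

lemma exists_fill_first_of_pair {g : G} (hfree : {s | adj s g}.Subsingleton) {m f : UMove S G}
    (hf : f.Fills g) {st : Finset S × Finset G} (hv : uValidFrom adj [m, f] st) :
    ∃ a q, a.Fills g ∧ q.length ≤ 1 ∧ uValidFrom adj (a :: q) st ∧
      uStateAfter (a :: q) st = uStateAfter [m, f] st := by
  by_cases hf₀ : uValidFrom adj [f] st
  · exact ⟨f, [m], hf, le_rfl, uValidFrom_swap hv hf₀, by simp [ustep_comm]⟩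
  · exact exists_fill_first_of_blocked hfree hf hv hf₀

lemma uPeakFrom_le_of_fills_head {g : G} {a : UMove S G} {q : List (UMove S G)}
    (ha : a.Fills g) (hq : q.length ≤ 1) {st : Finset S × Finset G}
    (hv : uValidFrom adj (a :: q) st) :
    uPeakFrom (a :: q) st ≤ max (bufCount st) (bufCount (uStateAfter (a :: q) st)) := by
  have hdrop : bufCount (ustep a st) ≤ bufCount st := bufCount_ustep_le ha ⟨hv.1, trivial⟩
  match q, hq with
  | [], _ => simp
  | [b], _ => simp only [uPeakFrom_cons, uPeakFrom_nil, uStateAfter_cons, uStateAfter_nil]; omega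

lemma exists_fill_first {g : G} (hfree : {s | adj s g}.Subsingleton) :
    ∀ (l : List (UMove S G)) (st : Finset S × Finset G), uValidFrom adj l st → g ∉ st.2 →
      g ∈ (uStateAfter l st).2 →
      ∃ a q, a.Fills g ∧ uValidFrom adj (a :: q) st ∧
        uStateAfter (a :: q) st = uStateAfter l st ∧ uPeakFrom (a :: q) st ≤ uPeakFrom l st
  | [], _, _, hg, hg' => absurd hg' hg
  | m :: l, st, hv, hg, hg' => by
    by_cases hm : m.Fills g
    · exact ⟨m, l, hm, hv, rfl, le_rfl⟩
    have hg₁ : g ∉ (ustep m st).2 := by simp [mem_ustep_snd, hm, hg]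
    obtain ⟨f, r, hf, hvfr, hstate, hpeak⟩ := exists_fill_first hfree l _ hv.2 hg₁ hg'
    obtain ⟨a, q, ha, hq, hvaq, hstate'⟩ :=
      exists_fill_first_of_pair hfree hf (st := st) ⟨hv.1, hvfr.1, trivial⟩
    refine ⟨a, q ++ r, ha, ?_, ?_, ?_⟩
    · rw [← List.cons_append, uValidFrom_append, hstate']
      exact ⟨hvaq, hvfr.2⟩
    · rw [← List.cons_append, uStateAfter_append, hstate']
      simpa using hstate
    · rw [← List.cons_append, uPeakFrom_append, hstate']
      have hpair := hstate' ▸ uPeakFrom_le_of_fills_head ha hq hvaq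
      have hend := bufCount_le_uPeakFrom r (ustep f (ustep m st))
      simp only [uPeakFrom_cons, uStateAfter_cons, uStateAfter_nil] at hpeak hpair ⊢
      omega

end PullForward

/-- In a bipartite unlabeled dependency graph, filling a 'free goal'
(a goal vertex with at most one neighboring start vertex) first never increases the
optimal running buffer: for every complete plan there is a complete plan, no worse in
peak running buffer, whose first operation fills `g`. -/
theorem fill_free_goal_first {S G : Type*} [DecidableEq S] [DecidableEq G]
    (adj : S → G → Prop) (g : G) (hfree : {s | adj s g}.Subsingleton)
    (l : List (UMove S G)) (hl : UCompletePlan adj l) :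
    ∃ l' : List (UMove S G), UCompletePlan adj l' ∧ uPeak l' ≤ uPeak l ∧
      ∃ rest : List (UMove S G),
        (∃ s, l' = UMove.direct s g :: rest) ∨ l' = UMove.fromBuffer g :: rest := by
  obtain ⟨hv, hremoved, hfilled⟩ := hl
  obtain ⟨a, q, ha, hv', hstate, hpeak⟩ :=
    exists_fill_first hfree l (∅, ∅) hv (Finset.notMem_empty g) (hfilled g)
  refine ⟨a :: q, ⟨hv', hstate ▸ hremoved, hstate ▸ hfilled⟩, hpeak, q, ?_⟩
  cases a with
  | toBuffer s => exact ha.elim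
  | fromBuffer h => exact Or.inr (ha ▸ rfl)
  | direct s h => exact Or.inl ⟨s, ha ▸ rfl⟩
end
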